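/- Let x be a μ-permissible extended alcove for GL_n, and let i, j ∈ {0,…,n−1}. Set j' = j if i > j, and j' = j − n otherwise, and extend ω to negative indices by ω_{m−n} := ω_m + 𝟏. Then r_{ij}(x) equals the number of indices k ∈ {1,…,n} with x_i(k) < ω_{j'}(k), and moreover this number equals the number of such k lying in the cyclic interval (j,i] ⊆ ℤ/nℤ. -/

import Mathlib

open Finset

/-- Elements of `ℤⁿ`; the coordinate `v(j)` for `1 ≤ j ≤ n` is `v ⟨j-1, _⟩`. -/
abbrev Vec (n : ℕ) := Fin n → ℤ

/-- The extension of a tuple `(x_0, …, x_{n-1})` by `x_n := x_0 - (1,…,1)`. -/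
def xext (n : ℕ) [NeZero n] (x : Fin n → Vec n) (m : ℕ) : Vec n :=
  if h : m < n then x ⟨m, h⟩ else fun j => x ⟨0, Nat.pos_of_ne_zero (NeZero.ne n)⟩ j - 1

/-- An extended alcove for `GL_n`: setting `x_n := x_0 - (1,…,1)`, for each
`i ∈ {0,…,n-1}` there is exactly one coordinate `j` with `x_{i+1}(j) = x_i(j) - 1`,
and `x_{i+1}(j') = x_i(j')` for all other coordinates `j'`. -/
def IsExtendedAlcove (n : ℕ) [NeZero n] (x : Fin n → Vec n) : Prop :=
  ∀ i : Fin n, ∃! j : Fin n,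
    xext n x ((i : ℕ) + 1) j = xext n x (i : ℕ) j - 1 ∧
      ∀ j' : Fin n, j' ≠ j → xext n x ((i : ℕ) + 1) j' = xext n x (i : ℕ) j'

/-- The standard alcove `ω`: `ω_i(j) = -1` for `j ≤ i` and `ω_i(j) = 0` for `j > i`
(coordinates `j ∈ {1,…,n}`). -/
def stdAlc (n : ℕ) (i : ℕ) : Vec n := fun j => if (j : ℕ) + 1 ≤ i then -1 else 0

/-- `μ`-permissibility for `μ = (1^{(r)}, 0^{(n-r)})`:
`ω_i ≤ x_i ≤ ω_i + (1,…,1)` componentwise, and `Σ_j x_i(j) = n - r - i`. -/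
def IsMuPermissible (n : ℕ) (r : ℕ) (x : Fin n → Vec n) : Prop :=
  ∀ i : Fin n,
    (∀ j, stdAlc n (i : ℕ) j ≤ x i j ∧ x i j ≤ stdAlc n (i : ℕ) j + 1) ∧
    (∑ j, x i j) = (n : ℤ) - (r : ℤ) - ((i : ℕ) : ℤ)

/-- The cyclic interval `(j, i] = {j+1, j+2, …, i} ⊆ ℤ/nℤ`; it is all of `ℤ/nℤ` when `i = j`. -/
def cycInt (n : ℕ) [NeZero n] (j i : ZMod n) : Finset (ZMod n) :=
  (Finset.Icc 1 (if i = j then n else (i - j).val)).image fun m : ℕ => j + (m : ZMod n)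

/-- The `Fin n`-index of the coordinate `∈ {1,…,n}` representing the residue `k ∈ ℤ/nℤ`. -/
def toIdx (n : ℕ) [NeZero n] (k : ZMod n) : Fin n := ⟨(k - 1).val, ZMod.val_lt _⟩

/-- The invariant `r_{ij}(x) = Σ_{k ∈ (j,i]} (ω_i(k) - x_i(k) + 1)` for residues
`i, j ∈ ℤ/nℤ`, the subscript `i` being taken via its representative in `{0,…,n-1}`. -/
def rInv (n : ℕ) [NeZero n] (x : Fin n → Vec n) (i j : ZMod n) : ℤ :=
  ∑ k ∈ cycInt n j i,
    (stdAlc n i.val (toIdx n k) - x ⟨i.val, ZMod.val_lt i⟩ (toIdx n k) + 1)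

/-! The shifted alcove `ω_{j'}` is `ω_i + 𝟏_{(j,i]}`. Since `ω_i ≤ x_i ≤ ω_i + 𝟏`, both the
condition `x_i(k) < ω_{j'}(k)` and the summand `ω_i(k) - x_i(k) + 1` of `r_{ij}(x)` are then the
indicator of `k ∈ (j,i]` and `x_i(k) = ω_i(k)`. -/

namespace ZMod

theorem val_natCast_sub_natCast {n a b : ℕ} [NeZero n] (ha : a < n) (hb : b < n) :
    ((a : ZMod n) - b).val = if b ≤ a then a - b else a + n - b := by
  have hcast : (a : ZMod n) - b = ((if b ≤ a then a - b else a + n - b : ℕ) : ZMod n) := by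
    split_ifs with hba
    · rw [Nat.cast_sub hba]
    · rw [Nat.cast_sub (by omega), Nat.cast_add, ZMod.natCast_self, add_zero]
  rw [hcast, ZMod.val_natCast_of_lt (by split_ifs <;> omega)]

theorem mem_image_add_Icc_iff {n M : ℕ} [NeZero n] (hM : M ≤ n) (j k : ZMod n) :
    k ∈ (Finset.Icc 1 M).image (fun m : ℕ => j + m) ↔ (k - j - 1).val < M := by
  simp only [Finset.mem_image, Finset.mem_Icc]
  constructor
  · rintro ⟨m, ⟨hm1, hmM⟩, rfl⟩
    have hcast : j + (m : ZMod n) - j - 1 = ((m - 1 : ℕ) : ZMod n) := by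
      rw [Nat.cast_sub hm1]; ring
    rw [hcast, ZMod.val_natCast_of_lt (by omega)]
    omega
  · intro hk
    refine ⟨(k - j - 1).val + 1, ⟨by omega, by omega⟩, ?_⟩
    rw [Nat.cast_add, ZMod.natCast_zmod_val]
    ring

end ZMod

theorem toIdx_injective (n : ℕ) [NeZero n] : Function.Injective (toIdx n) := by
  intro a b h
  simpa using ZMod.val_injective n (congrArg Fin.val h)

theorem toIdx_natCast_add_one {n : ℕ} [NeZero n] (k : Fin n) :
    toIdx n (((k : ℕ) : ZMod n) + 1) = k := by
  ext
  simp [toIdx, ZMod.val_natCast_of_lt k.isLt]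

def cycIdx (n : ℕ) [NeZero n] (j i : ZMod n) : Finset (Fin n) :=
  (cycInt n j i).image (toIdx n)

theorem mem_cycIdx_iff {n i j : ℕ} [NeZero n] (hi : i < n) (hj : j < n) (k : Fin n) :
    k ∈ cycIdx n j i ↔ if j < i then j ≤ k ∧ (k : ℕ) < i else j ≤ k ∨ (k : ℕ) < i := by
  have hM : (if (i : ZMod n) = j then n else ((i : ZMod n) - j).val) ≤ n := by
    split_ifs
    exacts [le_rfl, (ZMod.val_lt _).le]
  have hij : (i : ZMod n) = j ↔ i = j := by
    rw [ZMod.natCast_eq_natCast_iff', Nat.mod_eq_of_lt hi, Nat.mod_eq_of_lt hj]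
  have hk : k ∈ cycIdx n j i ↔ ((k : ℕ) : ZMod n) + 1 ∈ cycInt n j i := by
    rw [cycIdx, ← (toIdx_injective n).mem_finset_image, toIdx_natCast_add_one]
  rw [hk, cycInt, ZMod.mem_image_add_Icc_iff hM, add_sub_right_comm, add_sub_cancel_right,
    ZMod.val_natCast_sub_natCast k.isLt hj, ZMod.val_natCast_sub_natCast hi hj]
  simp only [hij]
  split_ifs <;> omega

theorem stdAlc_sub_add_one_eq_ite {n i : ℕ} {X : Vec n} {k : Fin n}
    (hX : stdAlc n i k ≤ X k ∧ X k ≤ stdAlc n i k + 1) :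
    stdAlc n i k - X k + 1 = if X k = stdAlc n i k then 1 else 0 := by
  split_ifs <;> omega

theorem lt_shiftedStdAlc_iff {n i j : ℕ} [NeZero n] (hi : i < n) (hj : j < n) {X : Vec n}
    (hX : ∀ k, stdAlc n i k ≤ X k ∧ X k ≤ stdAlc n i k + 1) (k : Fin n) :
    X k < (if j < i then stdAlc n j else fun k => stdAlc n j k + 1) k ↔
      k ∈ cycIdx n j i ∧ X k = stdAlc n i k := by
  have hXk := hX k
  rw [mem_cycIdx_iff hi hj, apply_ite (fun f : Vec n => f k)]
  simp only [stdAlc] at hXk ⊢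
  split_ifs at hXk ⊢ <;> omega

theorem rInv_eq_sum_cycIdx {n i : ℕ} [NeZero n] (hi : i < n) (x : Fin n → Vec n) (j : ZMod n) :
    rInv n x i j = ∑ k ∈ cycIdx n j i, (stdAlc n i k - x ⟨i, hi⟩ k + 1) := by
  have hval : (i : ZMod n).val = i := ZMod.val_natCast_of_lt hi
  rw [rInv, cycIdx, Finset.sum_image fun a _ b _ h => toIdx_injective n h]
  simp only [hval]

theorem rInv_eq_card_lt_general
    (n r : ℕ) [NeZero n]
    (x : Fin n → Vec n) (hperm : IsMuPermissible n r x)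
    (i j : ℕ) (hi : i < n) (hj : j < n) :
    let ωj' : Vec n := if j < i then stdAlc n j else fun k => stdAlc n j k + 1
    rInv n x (i : ZMod n) (j : ZMod n) =
      ((Finset.univ.filter (fun k : Fin n => x ⟨i, hi⟩ k < ωj' k)).card : ℤ) ∧
    (Finset.univ.filter (fun k : Fin n => x ⟨i, hi⟩ k < ωj' k)).card =
      ((cycInt n (j : ZMod n) (i : ZMod n)).filter
        (fun kk : ZMod n => x ⟨i, hi⟩ (toIdx n kk) < ωj' (toIdx n kk))).card := by
  intro ωj'
  have hbox := (hperm ⟨i, hi⟩).1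
  have hlt := lt_shiftedStdAlc_iff hi hj hbox
  have hsupp : Finset.univ.filter (fun k => x ⟨i, hi⟩ k < ωj' k) =
      (cycIdx n j i).filter (fun k => x ⟨i, hi⟩ k < ωj' k) := by
    ext k
    simp only [Finset.mem_filter, Finset.mem_univ, true_and]
    exact ⟨fun h => ⟨((hlt k).1 h).1, h⟩, And.right⟩
  refine ⟨?_, ?_⟩
  · rw [rInv_eq_sum_cycIdx hi, hsupp, Finset.natCast_card_filter]
    refine Finset.sum_congr rfl fun k hk => ?_
    rw [stdAlc_sub_add_one_eq_ite (hbox k)]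
    exact if_congr ⟨fun h => (hlt k).2 ⟨hk, h⟩, fun h => ((hlt k).1 h).2⟩ rfl rfl
  · rw [hsupp, cycIdx, Finset.filter_image, Finset.card_image_of_injective _ (toIdx_injective n)]

/-- For a `μ`-permissible extended alcove `x` for `GL_n` and `i, j ∈ {0,…,n-1}`, with
`j' = j` if `i > j` and `j' = j - n` otherwise (extending `ω` by `ω_{m-n} = ω_m + 1`),
the invariant `r_{ij}(x)` equals the number of coordinates `k ∈ {1,…,n}` with
`x_i(k) < ω_{j'}(k)`, and moreover this number equals the number of such `k` lying in
the cyclic interval `(j, i] ⊆ ℤ/nℤ`. -/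
theorem rInv_eq_card_lt
    (n r : ℕ) (hn : 2 ≤ n) (hr0 : 0 < r) (hrn : r < n) [NeZero n]
    (x : Fin n → Vec n) (hx : IsExtendedAlcove n x) (hperm : IsMuPermissible n r x)
    (i j : ℕ) (hi : i < n) (hj : j < n) :
    let ωj' : Vec n := if j < i then stdAlc n j else fun k => stdAlc n j k + 1
    rInv n x (i : ZMod n) (j : ZMod n) =
      ((Finset.univ.filter (fun k : Fin n => x ⟨i, hi⟩ k < ωj' k)).card : ℤ) ∧
    (Finset.univ.filter (fun k : Fin n => x ⟨i, hi⟩ k < ωj' k)).card =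
      ((cycInt n (j : ZMod n) (i : ZMod n)).filter
        (fun kk : ZMod n => x ⟨i, hi⟩ (toIdx n kk) < ωj' (toIdx n kk))).card :=
  rInv_eq_card_lt_general n r x hperm i j hi hj
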